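/- Let A, B, C be three non-collinear points in the plane ℝ² and let P be a point, not collinear with any two of A, B, C, lying outside the (closed) triangle ABC. Then at least one of the three lines through P and one of the points A, B, C separates none of the pairs {A,B}, {A,C}, {B,C}. -/

import Mathlib

open scoped Classical

noncomputable section

/-- The set Pts is in general position: no three distinct points are collinear. -/
def GenPos (Pts : Finset (ℝ × ℝ)) : Prop :=
  ∀ A ∈ Pts, ∀ B ∈ Pts, ∀ C ∈ Pts, A ≠ B → A ≠ C → B ≠ C →
    ¬ Collinear ℝ ({A, B, C} : Set (ℝ × ℝ))

/-- `sepCount Pts P Q` is the number of unordered pairs `{R, S}` of points of `Pts \ {P, Q}`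
such that the line through `R` and `S` strictly separates `P` and `Q`. -/
def sepCount (Pts : Finset (ℝ × ℝ)) (P Q : ℝ × ℝ) : ℕ :=
  ((Finset.powersetCard 2 (Pts \ {P, Q})).filter
    (fun s => (affineSpan ℝ (↑s : Set (ℝ × ℝ))).SOppSide P Q)).card

/-- The vertices of the convex hull of `Pts` (its extreme points). -/
def hullVertices (Pts : Finset (ℝ × ℝ)) : Set (ℝ × ℝ) :=
  Set.extremePoints ℝ (convexHull ℝ (↑Pts : Set (ℝ × ℝ)))

/-- `Q : ZMod k → ℝ × ℝ` lists the points of `S` in convex position, in cyclic order: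
`Q` is an injective enumeration of `S` and, for every `i`, all points of `S` other than
`Q i` and `Q (i+1)` lie strictly on the same side of the line through `Q i` and `Q (i+1)`
(i.e. each consecutive pair spans an edge of the convex hull of `S`). -/
def IsConvexCycle (k : ℕ) (S : Set (ℝ × ℝ)) (Q : ZMod k → ℝ × ℝ) : Prop :=
  Function.Injective Q ∧ Set.range Q = S ∧
    ∀ i : ZMod k, ∀ x ∈ S, ∀ y ∈ S,
      x ∉ ({Q i, Q (i + 1)} : Set (ℝ × ℝ)) → y ∉ ({Q i, Q (i + 1)} : Set (ℝ × ℝ)) →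
        (affineSpan ℝ ({Q i, Q (i + 1)} : Set (ℝ × ℝ))).SSameSide x y

/-!
Write `orient P X Y` for twice the signed area of `PXY`. A line through `P` and a vertex contains
that vertex, so it can only separate the other two. If each of the three lines did so, then
`orient P B C`, `orient P C A`, `orient P A B` would all have the same sign; since they are, up to
normalisation, the barycentric coordinates of `P` with respect to `ABC`, `P` would lie in the
closed triangle.
-/

def orient (P X Y : ℝ × ℝ) : ℝ :=
  (X.1 - P.1) * (Y.2 - P.2) - (X.2 - P.2) * (Y.1 - P.1)

lemma orient_swap (P X Y : ℝ × ℝ) : orient P Y X = -orient P X Y := by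
  unfold orient; ring

lemma collinear_of_orient_eq_zero {P X Y : ℝ × ℝ} (h : orient P X Y = 0) :
    Collinear ℝ ({P, X, Y} : Set (ℝ × ℝ)) := by
  by_cases hXP : X = P
  · simpa [hXP] using collinear_pair ℝ P Y
  have hn : (X.1 - P.1) ^ 2 + (X.2 - P.2) ^ 2 ≠ 0 := fun h0 =>
    hXP (Prod.ext (by nlinarith) (by nlinarith))
  -- `Q - P` is its projection on `X - P` plus `orient P X Q` times a normal of `X - P`
  have onLine : ∀ Q : ℝ × ℝ, orient P X Q = 0 → ∃ r : ℝ, Q = r • (X - P) +ᵥ P := by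
    intro Q hQ
    unfold orient at hQ
    refine ⟨((X.1 - P.1) * (Q.1 - P.1) + (X.2 - P.2) * (Q.2 - P.2)) /
      ((X.1 - P.1) ^ 2 + (X.2 - P.2) ^ 2), Prod.ext ?_ ?_⟩
    all_goals
      simp only [vadd_eq_add, Prod.fst_add, Prod.snd_add, Prod.smul_fst, Prod.smul_snd,
        Prod.fst_sub, Prod.snd_sub, smul_eq_mul]
      field_simp
    · linear_combination -(X.2 - P.2) * hQ
    · linear_combination (X.1 - P.1) * hQ
  rw [collinear_iff_of_mem (Set.mem_insert P _)]
  refine ⟨X - P, fun Q hQ => onLine Q ?_⟩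
  rcases hQ with rfl | rfl | rfl
  · unfold orient; ring
  · unfold orient; ring
  · exact h

lemma orient_mul_neg_of_sOppSide {P X Y Z : ℝ × ℝ}
    (hY : orient P X Y ≠ 0) (hZ : orient P X Z ≠ 0) (h : line[ℝ, P, X].SOppSide Y Z) :
    orient P X Y * orient P X Z < 0 := by
  obtain ⟨Q, hQ, t, ⟨ht0, ht1⟩, hYZ⟩ := AffineSubspace.wOppSide_iff_exists_wbtw.1 h.wOppSide
  obtain ⟨r, hPX⟩ := mem_affineSpan_pair_iff_exists_lineMap_eq.1 hQ
  have hQ_on : orient P X Q = 0 := by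
    rw [← hPX]
    simp only [orient, AffineMap.lineMap_apply_module, Prod.fst_add, Prod.snd_add, Prod.smul_fst,
      Prod.smul_snd, smul_eq_mul]
    ring
  have hQ_comb : orient P X Q = (1 - t) * orient P X Y + t * orient P X Z := by
    rw [← hYZ]
    simp only [orient, AffineMap.lineMap_apply_module, Prod.fst_add, Prod.snd_add, Prod.smul_fst,
      Prod.smul_snd, smul_eq_mul]
    ring
  by_contra! hnn
  have ht : t * (orient P X Z * orient P X Z) ≤ 0 := by
    have := mul_nonneg (sub_nonneg.2 ht1) hnn
    linear_combination this + orient P X Z * (hQ_comb.symm.trans hQ_on)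
  obtain rfl : t = 0 := le_antisymm (nonpos_of_mul_nonpos_left ht (mul_self_pos.2 hZ)) ht0
  exact hY (by linarith)

lemma mem_convexHull_triple_of_smul_add_eq {E : Type*} [AddCommGroup E] [Module ℝ E]
    {A B C P : E} {a b c : ℝ} (ha : 0 ≤ a) (hb : 0 ≤ b) (hc : 0 ≤ c) (hs : 0 < a + b + c)
    (h : a • A + b • B + c • C = (a + b + c) • P) :
    P ∈ convexHull ℝ ({A, B, C} : Set E) := by
  have hP : P = (a / (a + b + c)) • A + (b / (a + b + c)) • B + (c / (a + b + c)) • C := by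
    rw [← smul_right_injective E hs.ne' |>.eq_iff, ← h]
    simp only [smul_add, smul_smul, mul_div_cancel₀ _ hs.ne']
  have hmem := (convex_convexHull ℝ ({A, B, C} : Set E)).sum_mem (t := Finset.univ)
    (w := ![a / (a + b + c), b / (a + b + c), c / (a + b + c)]) (z := ![A, B, C])
    (fun i _ => by fin_cases i <;> dsimp <;> positivity)
    (by simp [Fin.sum_univ_three, ← add_div, hs.ne'])
    (fun i _ => by fin_cases i <;> exact subset_convexHull ℝ _ (by simp))
  rw [hP]
  simpa [Fin.sum_univ_three, add_assoc] using hmem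

lemma mem_convexHull_of_orient_mul_pos {A B C P : ℝ × ℝ}
    (hxy : 0 < orient P B C * orient P C A) (hyz : 0 < orient P C A * orient P A B) :
    P ∈ convexHull ℝ ({A, B, C} : Set (ℝ × ℝ)) := by
  set x := orient P B C
  set y := orient P C A
  set z := orient P A B
  have hxz : 0 < x * z :=
    pos_of_mul_pos_right ((mul_pos hxy hyz).trans_eq (by ring)) (mul_self_nonneg y)
  -- `x, y, z` are the barycentric coordinates of `P`, up to the common factor `x + y + z`
  have hbary : x • A + y • B + z • C = (x + y + z) • P := by
    ext <;> simp only [x, y, z, orient, Prod.fst_add, Prod.snd_add, Prod.smul_fst, Prod.smul_snd,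
      smul_eq_mul] <;> ring
  refine mem_convexHull_triple_of_smul_add_eq (a := x * (x + y + z)) (b := y * (x + y + z))
    (c := z * (x + y + z)) (by nlinarith) (by nlinarith) (by nlinarith)
    (by nlinarith [mul_self_nonneg x, mul_self_nonneg y, mul_self_nonneg z]) ?_
  linear_combination (norm := module) (x + y + z) • hbary

theorem outside_point_some_line_separates_nothing_general (A B C P : ℝ × ℝ)
    (hPAB : ¬ Collinear ℝ ({P, A, B} : Set (ℝ × ℝ)))
    (hPAC : ¬ Collinear ℝ ({P, A, C} : Set (ℝ × ℝ)))
    (hPBC : ¬ Collinear ℝ ({P, B, C} : Set (ℝ × ℝ)))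
    (hout : P ∉ convexHull ℝ ({A, B, C} : Set (ℝ × ℝ))) :
    (¬ (affineSpan ℝ ({P, A} : Set (ℝ × ℝ))).SOppSide A B ∧
      ¬ (affineSpan ℝ ({P, A} : Set (ℝ × ℝ))).SOppSide A C ∧
      ¬ (affineSpan ℝ ({P, A} : Set (ℝ × ℝ))).SOppSide B C) ∨
    (¬ (affineSpan ℝ ({P, B} : Set (ℝ × ℝ))).SOppSide A B ∧
      ¬ (affineSpan ℝ ({P, B} : Set (ℝ × ℝ))).SOppSide A C ∧
      ¬ (affineSpan ℝ ({P, B} : Set (ℝ × ℝ))).SOppSide B C) ∨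
    (¬ (affineSpan ℝ ({P, C} : Set (ℝ × ℝ))).SOppSide A B ∧
      ¬ (affineSpan ℝ ({P, C} : Set (ℝ × ℝ))).SOppSide A C ∧
      ¬ (affineSpan ℝ ({P, C} : Set (ℝ × ℝ))).SOppSide B C) := by
  have hAB : orient P A B ≠ 0 := mt collinear_of_orient_eq_zero hPAB
  have hAC : orient P A C ≠ 0 := mt collinear_of_orient_eq_zero hPAC
  have hBC : orient P B C ≠ 0 := mt collinear_of_orient_eq_zero hPBC
  have onA := right_mem_affineSpan_pair ℝ P A
  have onB := right_mem_affineSpan_pair ℝ P B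
  have onC := right_mem_affineSpan_pair ℝ P C
  by_contra hnone
  have sepA : line[ℝ, P, A].SOppSide B C := by
    by_contra h
    exact hnone (.inl ⟨fun h' => h'.left_notMem onA, fun h' => h'.left_notMem onA, h⟩)
  have sepB : line[ℝ, P, B].SOppSide A C := by
    by_contra h
    exact hnone (.inr (.inl ⟨fun h' => h'.right_notMem onB, h, fun h' => h'.left_notMem onB⟩))
  have sepC : line[ℝ, P, C].SOppSide A B := by
    by_contra h
    exact hnone (.inr (.inr ⟨h, fun h' => h'.right_notMem onC, fun h' => h'.right_notMem onC⟩))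
  have hA := orient_mul_neg_of_sOppSide hAB hAC sepA
  have hB := orient_mul_neg_of_sOppSide (by rwa [orient_swap, neg_ne_zero]) hBC sepB
  have hC := orient_mul_neg_of_sOppSide (by rwa [orient_swap, neg_ne_zero])
    (by rwa [orient_swap, neg_ne_zero]) sepC
  rw [orient_swap P A B] at hB
  rw [orient_swap P A C, orient_swap P B C] at hC
  exact hout (mem_convexHull_of_orient_mul_pos (by rw [orient_swap P A C]; linarith)
    (by rw [orient_swap P A C]; linarith))

/-- If `A`, `B`, `C` are non-collinear and `P`, not collinear with any two of `A`, `B`, `C`,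
lies outside the closed triangle `ABC`, then at least one of the three lines through `P` and
one of `A`, `B`, `C` separates none of the pairs `{A,B}`, `{A,C}`, `{B,C}`. -/
theorem outside_point_some_line_separates_nothing (A B C P : ℝ × ℝ)
    (hABC : ¬ Collinear ℝ ({A, B, C} : Set (ℝ × ℝ)))
    (hPAB : ¬ Collinear ℝ ({P, A, B} : Set (ℝ × ℝ)))
    (hPAC : ¬ Collinear ℝ ({P, A, C} : Set (ℝ × ℝ)))
    (hPBC : ¬ Collinear ℝ ({P, B, C} : Set (ℝ × ℝ)))
    (hout : P ∉ convexHull ℝ ({A, B, C} : Set (ℝ × ℝ))) :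
    (¬ (affineSpan ℝ ({P, A} : Set (ℝ × ℝ))).SOppSide A B ∧
      ¬ (affineSpan ℝ ({P, A} : Set (ℝ × ℝ))).SOppSide A C ∧
      ¬ (affineSpan ℝ ({P, A} : Set (ℝ × ℝ))).SOppSide B C) ∨
    (¬ (affineSpan ℝ ({P, B} : Set (ℝ × ℝ))).SOppSide A B ∧
      ¬ (affineSpan ℝ ({P, B} : Set (ℝ × ℝ))).SOppSide A C ∧
      ¬ (affineSpan ℝ ({P, B} : Set (ℝ × ℝ))).SOppSide B C) ∨
    (¬ (affineSpan ℝ ({P, C} : Set (ℝ × ℝ))).SOppSide A B ∧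
      ¬ (affineSpan ℝ ({P, C} : Set (ℝ × ℝ))).SOppSide A C ∧
      ¬ (affineSpan ℝ ({P, C} : Set (ℝ × ℝ))).SOppSide B C) :=
  outside_point_some_line_separates_nothing_general A B C P hPAB hPAC hPBC hout

end
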